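/- Let u : B₁⁺ ∪ ∂'B₁⁺ → ℝ be continuous, C² in the open half ball, solving −Δu = n(n−2)u^((n+2)/(n−2)) with u ≥ 0 and u(x',0) = 0 for |x'| < 1. Fix x = (x',0) with 0 < |x'| < 1 and 0 < λ < λ₂ < min(|x'|, dist(x, ∂B₁)). If u(z) ≤ M·zₙ on B_{λ₂}⁺(x) and u(y) ≥ c₀·yₙ on B₁⁺, then the Kelvin transform u_{x,λ}(y) = (λ/|y−x|)^{n−2}·u(x + λ²(y−x)/|y−x|²) satisfies u_{x,λ}(y) ≤ u(y) for all y ∈ B₁⁺ with |y−x| ≥ λ₂, provided λ ≤ λ₂·(c₀/M)^{1/n}. -/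
import Mathlib


open scoped BigOperators

variable {n : ℕ}

/-- The Euclidean Laplacian of `u : ℝⁿ → ℝ` at `x`. -/
noncomputable def lap (u : EuclideanSpace ℝ (Fin n) → ℝ)
    (x : EuclideanSpace ℝ (Fin n)) : ℝ :=
  ∑ i, fderiv ℝ (fun y => fderiv ℝ u y (EuclideanSpace.single i 1)) x (EuclideanSpace.single i 1)

/-- Step (b) of the moving spheres method: for small `λ` the Kelvin transform `u_{x,λ}`
lies below `u` outside the half-ball `B_{λ₂}⁺(x)`. -/
theorem stmt11 (hn : 3 ≤ n) (u : EuclideanSpace ℝ (Fin n) → ℝ)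
    (hcont : ContinuousOn u {y | ‖y‖ < 1 ∧ 0 ≤ y ⟨n - 1, by omega⟩})
    (hu2 : ContDiffOn ℝ 2 u {y | ‖y‖ < 1 ∧ 0 < y ⟨n - 1, by omega⟩})
    (heq : ∀ y : EuclideanSpace ℝ (Fin n), ‖y‖ < 1 → 0 < y ⟨n - 1, by omega⟩ →
      -lap u y = (n : ℝ) * ((n : ℝ) - 2) * u y ^ (((n : ℝ) + 2) / ((n : ℝ) - 2)))
    (hnonneg : ∀ y : EuclideanSpace ℝ (Fin n), ‖y‖ < 1 → 0 ≤ y ⟨n - 1, by omega⟩ → 0 ≤ u y)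
    (hbdry : ∀ y : EuclideanSpace ℝ (Fin n), ‖y‖ < 1 → y ⟨n - 1, by omega⟩ = 0 → u y = 0)
    (x : EuclideanSpace ℝ (Fin n)) (hxb : x ⟨n - 1, by omega⟩ = 0)
    (hx0 : 0 < ‖x‖) (hx1 : ‖x‖ < 1)
    (lam lam₂ : ℝ) (hlam : 0 < lam) (hlam₂ : lam < lam₂)
    (hlam₂' : lam₂ < min ‖x‖ (1 - ‖x‖))
    (M c₀ : ℝ) (hM : 0 < M) (hc₀ : 0 < c₀)
    (hub : ∀ z : EuclideanSpace ℝ (Fin n), ‖z - x‖ < lam₂ → 0 < z ⟨n - 1, by omega⟩ →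
      u z ≤ M * z ⟨n - 1, by omega⟩)
    (hlb : ∀ y : EuclideanSpace ℝ (Fin n), ‖y‖ < 1 → 0 < y ⟨n - 1, by omega⟩ →
      c₀ * y ⟨n - 1, by omega⟩ ≤ u y)
    (hsmall : lam ≤ lam₂ * (c₀ / M) ^ ((1 : ℝ) / n)) :
    ∀ y : EuclideanSpace ℝ (Fin n), ‖y‖ < 1 → 0 < y ⟨n - 1, by omega⟩ →
      lam₂ ≤ ‖y - x‖ →
      (lam / ‖y - x‖) ^ (n - 2) * u (x + (lam ^ 2 / ‖y - x‖ ^ 2) • (y - x)) ≤ u y := by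
  intro y hy hyn hry
  have hl2 : 0 < lam₂ := lt_trans hlam hlam₂
  set i : Fin n := ⟨n - 1, by omega⟩ with hi
  set r := ‖y - x‖ with hrdef
  have hr : 0 < r := lt_of_lt_of_le hl2 hry
  set z := x + (lam ^ 2 / r ^ 2) • (y - x) with hz
  have hcoef : 0 < lam ^ 2 / r ^ 2 := by positivity
  have hzn : z i = (lam ^ 2 / r ^ 2) * y i := by
    simp only [hz, PiLp.add_apply, PiLp.smul_apply, PiLp.sub_apply, smul_eq_mul, hxb]
    ring
  have hzsub : z - x = (lam ^ 2 / r ^ 2) • (y - x) := by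
    simp [hz]
  have hznorm : ‖z - x‖ = lam ^ 2 / r := by
    rw [hzsub, norm_smul, Real.norm_eq_abs, abs_of_pos hcoef, ← hrdef]
    field_simp
  have hzlt : ‖z - x‖ < lam₂ := by
    rw [hznorm, div_lt_iff₀ hr]
    nlinarith
  have hzi : 0 < z i := by
    rw [hzn]; exact mul_pos hcoef hyn
  have h1 : u z ≤ M * ((lam ^ 2 / r ^ 2) * y i) := by
    rw [← hzn]; exact hub z hzlt hzi
  have hpow : (0:ℝ) ≤ (lam / r) ^ (n - 2) := by positivity
  have h2 : n - 2 + 2 = n := by omega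
  have key : (lam / r) ^ (n - 2) * (lam ^ 2 / r ^ 2) = lam ^ n / r ^ n := by
    rw [div_pow, div_mul_div_comm, ← pow_add, ← pow_add, h2]
  have hcm : 0 < c₀ / M := div_pos hc₀ hM
  have hexp : ((c₀ / M) ^ ((1:ℝ) / n)) ^ n = c₀ / M := by
    rw [← Real.rpow_natCast ((c₀ / M) ^ ((1:ℝ)/n)) n, ← Real.rpow_mul hcm.le]
    rw [one_div, inv_mul_cancel₀ (by exact_mod_cast (by omega : n ≠ 0)), Real.rpow_one]
  have hln : lam ^ n ≤ lam₂ ^ n * (c₀ / M) := by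
    have := pow_le_pow_left₀ hlam.le hsmall n
    rwa [mul_pow, hexp] at this
  have hrn : lam₂ ^ n ≤ r ^ n := pow_le_pow_left₀ hl2.le hry n
  have hfrac : lam ^ n / r ^ n ≤ c₀ / M := by
    calc lam ^ n / r ^ n ≤ lam₂ ^ n * (c₀ / M) / lam₂ ^ n :=
          div_le_div₀ (by positivity) hln (by positivity) hrn
      _ = c₀ / M := by field_simp
  calc (lam / r) ^ (n - 2) * u z
      ≤ (lam / r) ^ (n - 2) * (M * ((lam ^ 2 / r ^ 2) * y i)) :=
        mul_le_mul_of_nonneg_left h1 hpow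
    _ = (lam / r) ^ (n - 2) * (lam ^ 2 / r ^ 2) * (M * y i) := by ring
    _ = lam ^ n / r ^ n * (M * y i) := by rw [key]
    _ ≤ (c₀ / M) * (M * y i) := by
        apply mul_le_mul_of_nonneg_right hfrac
        exact mul_nonneg hM.le hyn.le
    _ = c₀ * y i := by field_simp
    _ ≤ u y := hlb y hy hyn
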